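/- Given any reward model q̂_r : 𝒳 → 𝒜 → ℝ, define the single-sample CDR value f_CDR(x,A,ω) := ∑_{a∈𝒜} [ w(x,a)·( C(ω,a)·R(ω,a) − p_c(x,a,A)·q̂_r(x,a) ) + p_c(x,a,π)·q̂_r(x,a) ], where w(x,a) := p_c(x,a,π)/p_c(x,a,π₀) with the convention t/0 := 0. Under the independence of potential rewards condition, the click–reward factorization condition, and the click-wise common support condition, for every fixed context x ∈ 𝒳 the conditional expectation of the CDR value is model-free: E_{A∼π₀(x), ω∼κ(x,A)}[f_CDR(x,A,ω)] = ∑_{a∈𝒜} p_c(x,a,π)·q_r(x,a). -/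

import Mathlib

open scoped BigOperators Classical

/-- Expectation of a real-valued function under a PMF on a finite type. -/
noncomputable def pexp {X : Type*} [Fintype X] (p : PMF X) (f : X → ℝ) : ℝ :=
  ∑ x, (p x).toReal * f x

/-- Variance of a real-valued function under a PMF on a finite type. -/
noncomputable def pvar {X : Type*} [Fintype X] (p : PMF X) (f : X → ℝ) : ℝ :=
  pexp p (fun x => (f x - pexp p f) ^ 2)

/-- Joint distribution of one logged sample (x, A, ω) with x ∼ p, A ∼ π₀(x), ω ∼ κ(x,A). -/
noncomputable def logged {𝒳 ℛ Ω : Type*} (p : PMF 𝒳) (π₀ : 𝒳 → PMF ℛ)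
    (κ : 𝒳 → ℛ → PMF Ω) : PMF (𝒳 × ℛ × Ω) :=
  p.bind fun x => (π₀ x).bind fun A => (κ x A).map fun ω => (x, A, ω)

/-- Click probability of action a at context x given ranking A: p_c(x,a,A). -/
noncomputable def pcA {𝒳 ℛ Ω 𝒜 : Type*} [Fintype Ω]
    (κ : 𝒳 → ℛ → PMF Ω) (C : Ω → 𝒜 → ℝ) (x : 𝒳) (a : 𝒜) (A : ℛ) : ℝ :=
  pexp (κ x A) fun ω => C ω a

/-- Marginalized click probability of action a at context x under policy μ: p_c(x,a,μ). -/
noncomputable def pcPol {𝒳 ℛ Ω 𝒜 : Type*} [Fintype Ω] [Fintype ℛ]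
    (κ : 𝒳 → ℛ → PMF Ω) (C : Ω → 𝒜 → ℝ) (μ : 𝒳 → PMF ℛ) (x : 𝒳) (a : 𝒜) : ℝ :=
  pexp (μ x) fun A => pcA κ C x a A

/-- Policy value V(π). -/
noncomputable def polValue {𝒳 ℛ Ω 𝒜 : Type*} [Fintype 𝒳] [Fintype ℛ] [Fintype Ω] [Fintype 𝒜]
    (p : PMF 𝒳) (π : 𝒳 → PMF ℛ) (κ : 𝒳 → ℛ → PMF Ω) (C R : Ω → 𝒜 → ℝ) : ℝ :=
  pexp p fun x => pexp (π x) fun A => pexp (κ x A) fun ω => ∑ a, C ω a * R ω a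


/-! By linearity the CDR value splits into one term per action. Averaging over `ω ∼ κ(x,A)`
turns `C·R` into `p_c(x,a,A)·q_r(x,a)` (click–reward factorization), and averaging over
`A ∼ π₀(x)` turns each term into `w·p_c(x,a,π₀)·(q_r − q̂_r) + p_c(x,a,π)·q̂_r`. Common support
gives `w·p_c(x,a,π₀) = p_c(x,a,π)`, so the reward model cancels. -/

section pexp

variable {X : Type*} [Fintype X] (p : PMF X)

lemma PMF.sum_toReal_eq_one : ∑ x, (p x).toReal = 1 := by
  have h := congrArg ENNReal.toReal p.tsum_coe
  rwa [tsum_fintype, ENNReal.toReal_sum fun x _ => p.apply_ne_top x, ENNReal.toReal_one] at h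

lemma pexp_const (c : ℝ) : pexp p (fun _ => c) = c := by
  simp only [pexp, ← Finset.sum_mul, PMF.sum_toReal_eq_one, one_mul]

lemma pexp_add (f g : X → ℝ) : pexp p (fun x => f x + g x) = pexp p f + pexp p g := by
  simp only [pexp, mul_add, Finset.sum_add_distrib]

lemma pexp_sub (f g : X → ℝ) : pexp p (fun x => f x - g x) = pexp p f - pexp p g := by
  simp only [pexp, mul_sub, Finset.sum_sub_distrib]

lemma pexp_mul_const (f : X → ℝ) (c : ℝ) : pexp p (fun x => f x * c) = pexp p f * c := by
  simp only [pexp, Finset.sum_mul, mul_assoc]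

lemma pexp_const_mul (c : ℝ) (f : X → ℝ) : pexp p (fun x => c * f x) = c * pexp p f := by
  simp only [mul_comm c, pexp_mul_const]

lemma pexp_sum {ι : Type*} (s : Finset ι) (f : ι → X → ℝ) :
    pexp p (fun x => ∑ i ∈ s, f i x) = ∑ i ∈ s, pexp p (f i) := by
  simp only [pexp, Finset.mul_sum]
  exact Finset.sum_comm

lemma pexp_nonneg {f : X → ℝ} (hf : ∀ x, 0 ≤ f x) : 0 ≤ pexp p f :=
  Finset.sum_nonneg fun x _ => mul_nonneg ENNReal.toReal_nonneg (hf x)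

end pexp

lemma div_mul_cancel_of_pos_imp_pos {u v : ℝ} (hu : 0 ≤ u) (huv : 0 < u → 0 < v) :
    u / v * v = u := by
  rcases hu.eq_or_lt with rfl | hpos
  · simp
  · exact div_mul_cancel₀ u (huv hpos).ne'

section clicks

variable {𝒳 ℛ Ω 𝒜 : Type*} [Fintype ℛ] [Fintype Ω]
  {κ : 𝒳 → ℛ → PMF Ω} {C R : Ω → 𝒜 → ℝ}

lemma pcPol_nonneg (hC : ∀ ω a, 0 ≤ C ω a) (μ : 𝒳 → PMF ℛ) (x : 𝒳) (a : 𝒜) :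
    0 ≤ pcPol κ C μ x a :=
  pexp_nonneg _ fun _ => pexp_nonneg _ fun ω => hC ω a

/-- Where `p_c(π₀) = 0`, common support forces `p_c(π) = 0`, so the junk `t / 0 = 0` is harmless. -/
lemma pcPol_div_mul_pcPol {π π₀ : 𝒳 → PMF ℛ} (hC : ∀ ω a, 0 ≤ C ω a)
    (hsupp : ∀ x a, 0 < pcPol κ C π x a → 0 < pcPol κ C π₀ x a) (x : 𝒳) (a : 𝒜) :
    pcPol κ C π x a / pcPol κ C π₀ x a * pcPol κ C π₀ x a = pcPol κ C π x a :=
  div_mul_cancel_of_pos_imp_pos (pcPol_nonneg hC π x a) (hsupp x a)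

lemma pexp_pexp_doublyRobust_term {q_r : 𝒳 → 𝒜 → ℝ}
    (hfact : ∀ x a A,
      pexp (κ x A) (fun ω => C ω a * R ω a) = pcA κ C x a A * q_r x a)
    (μ : 𝒳 → PMF ℛ) (x : 𝒳) (a : 𝒜) (w c d : ℝ) :
    pexp (μ x) (fun A => pexp (κ x A) (fun ω =>
        w * (C ω a * R ω a - pcA κ C x a A * c) + d))
      = w * pcPol κ C μ x a * (q_r x a - c) + d := by
  have hinner : ∀ A, pexp (κ x A) (fun ω => w * (C ω a * R ω a - pcA κ C x a A * c) + d)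
      = pcA κ C x a A * (w * (q_r x a - c)) + d := by
    intro A
    rw [pexp_add, pexp_const_mul, pexp_sub, hfact, pexp_const, pexp_const]
    ring
  simp only [hinner, pexp_add, pexp_mul_const, pexp_const]
  rw [pcPol]
  ring

end clicks

theorem CDR_conditional_expectation_general {𝒳 ℛ Ω 𝒜 : Type*}
    [Fintype ℛ] [Fintype Ω] [Fintype 𝒜]
    (π π₀ : 𝒳 → PMF ℛ) (κ : 𝒳 → ℛ → PMF Ω)
    (C R : Ω → 𝒜 → ℝ) (hC : ∀ ω a, C ω a = 0 ∨ C ω a = 1)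
    (q_r : 𝒳 → 𝒜 → ℝ)
    (hfact : ∀ x a A,
      pexp (κ x A) (fun ω => C ω a * R ω a) = pcA κ C x a A * q_r x a)
    (hsupp : ∀ x a, 0 < pcPol κ C π x a → 0 < pcPol κ C π₀ x a)
    (qhat : 𝒳 → 𝒜 → ℝ) :
    ∀ x : 𝒳,
      pexp (π₀ x) (fun A => pexp (κ x A) (fun ω => ∑ a,
        ((pcPol κ C π x a / pcPol κ C π₀ x a) *
            (C ω a * R ω a - pcA κ C x a A * qhat x a)
          + pcPol κ C π x a * qhat x a)))
      = ∑ a, pcPol κ C π x a * q_r x a := by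
  intro x
  have hC_nonneg : ∀ ω a, 0 ≤ C ω a := fun ω a => by rcases hC ω a with h | h <;> simp [h]
  simp only [pexp_sum, pexp_pexp_doublyRobust_term hfact,
    pcPol_div_mul_pcPol hC_nonneg hsupp]
  exact Finset.sum_congr rfl fun a _ => by ring

/-- For every fixed context x, the conditional expectation of the CDR value is
model-free. -/
theorem CDR_conditional_expectation {𝒳 ℛ Ω 𝒜 : Type*}
    [Fintype 𝒳] [Nonempty 𝒳] [Fintype ℛ] [Nonempty ℛ] [Fintype Ω] [Nonempty Ω] [Fintype 𝒜]
    (π π₀ : 𝒳 → PMF ℛ) (κ : 𝒳 → ℛ → PMF Ω)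
    (C R : Ω → 𝒜 → ℝ) (hC : ∀ ω a, C ω a = 0 ∨ C ω a = 1)
    (q_r : 𝒳 → 𝒜 → ℝ)
    (hind : ∀ x a A, pexp (κ x A) (fun ω => R ω a) = q_r x a)
    (hfact : ∀ x a A,
      pexp (κ x A) (fun ω => C ω a * R ω a) = pcA κ C x a A * q_r x a)
    (hsupp : ∀ x a, 0 < pcPol κ C π x a → 0 < pcPol κ C π₀ x a)
    (qhat : 𝒳 → 𝒜 → ℝ) :
    ∀ x : 𝒳,
      pexp (π₀ x) (fun A => pexp (κ x A) (fun ω => ∑ a,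
        ((pcPol κ C π x a / pcPol κ C π₀ x a) *
            (C ω a * R ω a - pcA κ C x a A * qhat x a)
          + pcPol κ C π x a * qhat x a)))
      = ∑ a, pcPol κ C π x a * q_r x a :=
  CDR_conditional_expectation_general π π₀ κ C R hC q_r hfact hsupp qhat
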